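/- Let γ ∈ (0, 1/2) and ε ∈ (0,1). If η ≥ ln(ε) / (2 ln(1−2γ)) (equivalently (1−2γ)^{2η} ≤ ε), then for any finite Fourier series f on 𝕋^L with ‖f‖_{L²} ≤ 1, the noisy function f_noisy(θ) = Σ_ω (1−2γ)^{‖ω‖₁} a_ω e^{iω·θ} satisfies E_θ |f_noisy(θ) − f_noisy^{(η)}(θ)|² ≤ ε, where f_noisy^{(η)} keeps only frequencies with ‖ω‖₁ ≤ η. -/

import Mathlib

/-!
The difference `f_noisy - f_noisy^{(η)}` is the trigonometric polynomial carrying exactly the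
frequencies with `‖ω‖₁ > η`, each damped by `(1-2γ)^{‖ω‖₁} ≤ (1-2γ)^η`. The characters
`θ ↦ e^{iω·θ}` are orthogonal on `[0, 2π)^L`, so by Parseval its mean square is
`Σ_{‖ω‖₁>η} (1-2γ)^{2‖ω‖₁} |a_ω|² ≤ (1-2γ)^{2η} Σ_ω |a_ω|² ≤ (1-2γ)^{2η} ≤ ε`.
-/

open MeasureTheory Complex ComplexConjugate

noncomputable def torusChar {L : ℕ} (ω : Fin L → ℤ) (θ : Fin L → ℝ) : ℂ :=
  exp (I * ∑ k, (ω k : ℂ) * (θ k : ℂ))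

lemma torusChar_eq_prod {L : ℕ} (ω : Fin L → ℤ) (θ : Fin L → ℝ) :
    torusChar ω θ = ∏ k, exp (I * ω k * θ k) := by
  rw [torusChar, Finset.mul_sum, exp_sum]
  simp only [mul_assoc]

lemma continuous_torusChar {L : ℕ} (ω : Fin L → ℤ) : Continuous (torusChar ω) := by
  unfold torusChar; fun_prop

lemma torusChar_mul_conj {L : ℕ} (ω μ : Fin L → ℤ) (θ : Fin L → ℝ) :
    torusChar ω θ * conj (torusChar μ θ) = torusChar (ω - μ) θ := by
  simp only [torusChar, ← exp_conj, ← exp_add, map_mul, conj_I, map_sum, conj_ofReal,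
    map_intCast, Pi.sub_apply, Int.cast_sub]
  congr 1
  simp only [sub_mul, Finset.sum_sub_distrib]
  ring

lemma integral_Ico_exp_int_mul (n : ℤ) :
    ∫ x in Set.Ico 0 (2 * Real.pi), exp (I * n * x) = if n = 0 then (2 * Real.pi : ℂ) else 0 := by
  rw [integral_Ico_eq_integral_Ioo, ← integral_Ioc_eq_integral_Ioo,
    ← intervalIntegral.integral_of_le (by positivity)]
  split_ifs with hn
  · simp [hn]
  · have hc : I * n ≠ 0 := mul_ne_zero I_ne_zero (Int.cast_ne_zero.mpr hn)
    have hperiod : exp (I * n * (2 * Real.pi : ℝ)) = 1 := by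
      rw [← exp_int_mul_two_pi_mul_I n]; push_cast; ring_nf
    rw [integral_exp_mul_complex hc, hperiod]
    simp

lemma integral_pi_Ico_prod {L : ℕ} (f : Fin L → ℝ → ℂ) :
    ∫ θ in Set.univ.pi (fun _ => Set.Ico (0 : ℝ) (2 * Real.pi)), ∏ k, f k (θ k)
      = ∏ k, ∫ x in Set.Ico 0 (2 * Real.pi), f k x := by
  rw [volume_pi, Measure.restrict_pi_pi]
  exact integral_fintype_prod_eq_prod f

lemma integral_torusChar {L : ℕ} (ω : Fin L → ℤ) :
    ∫ θ in Set.univ.pi (fun _ => Set.Ico (0 : ℝ) (2 * Real.pi)), torusChar ω θ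
      = if ω = 0 then ((2 * Real.pi) ^ L : ℂ) else 0 := by
  simp only [torusChar_eq_prod]
  rw [integral_pi_Ico_prod (fun k x => exp (I * ω k * x))]
  simp only [integral_Ico_exp_int_mul]
  split_ifs with hω
  · simp [hω]
  · obtain ⟨k, hk⟩ := Function.ne_iff.mp hω
    exact Finset.prod_eq_zero (Finset.mem_univ k) (if_neg hk)

lemma integrableOn_pi_Ico_torusChar {L : ℕ} (ω : Fin L → ℤ) :
    IntegrableOn (torusChar ω) (Set.univ.pi fun _ => Set.Ico (0 : ℝ) (2 * Real.pi)) :=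
  ((continuous_torusChar ω).continuousOn.integrableOn_compact
    (isCompact_univ_pi fun _ => isCompact_Icc)).mono_set
      (Set.pi_mono fun _ _ => Set.Ico_subset_Icc_self)

lemma integral_norm_sq_sum_torusChar {L : ℕ} (T : Finset (Fin L → ℤ)) (c : (Fin L → ℤ) → ℂ) :
    ∫ θ in Set.univ.pi (fun _ => Set.Ico (0 : ℝ) (2 * Real.pi)),
        ‖∑ ω ∈ T, c ω * torusChar ω θ‖ ^ 2
      = (2 * Real.pi) ^ L * ∑ ω ∈ T, ‖c ω‖ ^ 2 := by
  have hexpand : ∀ θ, ((‖∑ ω ∈ T, c ω * torusChar ω θ‖ ^ 2 : ℝ) : ℂ)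
      = ∑ ω ∈ T, ∑ μ ∈ T, c ω * conj (c μ) * torusChar (ω - μ) θ := by
    intro θ
    rw [ofReal_pow, ← mul_conj', map_sum, Finset.sum_mul_sum]
    refine Finset.sum_congr rfl fun ω _ => Finset.sum_congr rfl fun μ _ => ?_
    rw [map_mul, ← torusChar_mul_conj]
    ring
  have hint : ∀ ω μ, IntegrableOn (fun θ => c ω * conj (c μ) * torusChar (ω - μ) θ)
      (Set.univ.pi fun _ => Set.Ico (0 : ℝ) (2 * Real.pi)) :=
    fun ω μ => (integrableOn_pi_Ico_torusChar (ω - μ)).const_mul _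
  apply ofReal_injective
  rw [← integral_complex_ofReal]
  simp only [hexpand]
  rw [integral_finsetSum T fun ω _ => integrable_finsetSum T fun μ _ => hint ω μ]
  simp only [integral_finsetSum T fun μ _ => hint _ μ, integral_const_mul, integral_torusChar,
    sub_eq_zero, mul_ite, mul_zero, Finset.sum_ite_eq, mul_conj']
  push_cast
  rw [Finset.mul_sum]
  refine Finset.sum_congr rfl fun ω hω => ?_
  rw [if_pos hω]
  ring

lemma sum_sq_norm_pow_mul_filter_not_le {ι : Type*} (S : Finset ι) (n : ι → ℕ) (a : ι → ℂ)
    {x : ℝ} (hx0 : 0 ≤ x) (hx1 : x ≤ 1) (η : ℕ) :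
    ∑ ω ∈ S.filter (fun ω => ¬ n ω ≤ η), ‖((x ^ n ω : ℝ) : ℂ) * a ω‖ ^ 2
      ≤ x ^ (2 * η) * ∑ ω ∈ S, ‖a ω‖ ^ 2 := by
  rw [Finset.mul_sum]
  refine (Finset.sum_le_sum fun ω hω => ?_).trans
    (Finset.sum_le_sum_of_subset_of_nonneg (Finset.filter_subset _ S) fun _ _ _ => by positivity)
  have hη : η ≤ n ω := (not_le.mp (Finset.mem_filter.mp hω).2).le
  rw [norm_mul, norm_real, Real.norm_of_nonneg (by positivity), mul_pow, ← pow_mul, mul_comm _ 2]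
  exact mul_le_mul_of_nonneg_right (pow_le_pow_of_le_one hx0 hx1 (by omega)) (by positivity)

lemma pow_two_mul_le_of_log_div_le {x ε : ℝ} (hx0 : 0 < x) (hx1 : x < 1) (hε : 0 < ε) {η : ℕ}
    (hη : Real.log ε / (2 * Real.log x) ≤ η) : x ^ (2 * η) ≤ ε := by
  have hlog : 2 * Real.log x < 0 := by linarith [Real.log_neg hx0 hx1]
  rw [← Real.log_le_log_iff (by positivity) hε, Real.log_pow]
  push_cast
  nlinarith [(div_le_iff_of_neg hlog).mp hη]

/-- If `γ ∈ (0,1/2)`, `ε ∈ (0,1)` and `η ≥ ln(ε)/(2 ln(1-2γ))` (so that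
`(1-2γ)^{2η} ≤ ε`), then for any finite Fourier series `f` on `𝕋^L` with
Parseval norm `Σ_ω |a_ω|² ≤ 1`, the truncation of the noisy series
`f_noisy(θ) = Σ_ω (1-2γ)^{‖ω‖₁} a_ω e^{iω·θ}` to frequencies `‖ω‖₁ ≤ η`
satisfies `E_θ |f_noisy(θ) − f_noisy^{(η)}(θ)|² ≤ ε`. -/
theorem stmt_19 (γ ε : ℝ) (hγ : γ ∈ Set.Ioo (0:ℝ) (1/2)) (hε : ε ∈ Set.Ioo (0:ℝ) 1)
    (η : ℕ) (hη : Real.log ε / (2 * Real.log (1 - 2 * γ)) ≤ (η : ℝ))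
    (L : ℕ) (S : Finset (Fin L → ℤ)) (a : (Fin L → ℤ) → ℂ)
    (hParseval : ∑ ω ∈ S, ‖a ω‖ ^ 2 ≤ 1)
    (fnoisy ftrunc : (Fin L → ℝ) → ℂ)
    (hfnoisy : ∀ θ, fnoisy θ = ∑ ω ∈ S,
      ((1 - 2 * γ) ^ (∑ k, (ω k).natAbs) : ℝ) * a ω *
        Complex.exp (Complex.I * ∑ k, (ω k : ℂ) * (θ k : ℂ)))
    (hftrunc : ∀ θ, ftrunc θ = ∑ ω ∈ S.filter (fun ω => (∑ k, (ω k).natAbs) ≤ η),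
      ((1 - 2 * γ) ^ (∑ k, (ω k).natAbs) : ℝ) * a ω *
        Complex.exp (Complex.I * ∑ k, (ω k : ℂ) * (θ k : ℂ))) :
    ((2 * Real.pi) ^ L : ℝ)⁻¹ *
        ∫ θ : Fin L → ℝ in Set.pi Set.univ (fun _ => Set.Ico (0:ℝ) (2 * Real.pi)),
          ‖fnoisy θ - ftrunc θ‖ ^ 2
      ≤ ε := by
  obtain ⟨hγ0, hγ1⟩ := hγ
  set x := 1 - 2 * γ
  have hx0 : 0 < x := by linarith
  have hx1 : x < 1 := by linarith
  set n : (Fin L → ℤ) → ℕ := fun ω => ∑ k, (ω k).natAbs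
  have htail : ∀ θ, fnoisy θ - ftrunc θ
      = ∑ ω ∈ S.filter (fun ω => ¬ n ω ≤ η), ((x ^ n ω : ℝ) : ℂ) * a ω * torusChar ω θ := by
    intro θ
    rw [hfnoisy, hftrunc, ← S.sum_filter_add_sum_filter_not (fun ω => n ω ≤ η),
      add_sub_cancel_left]
    rfl
  simp only [htail, integral_norm_sq_sum_torusChar]
  rw [inv_mul_cancel_left₀ (by positivity)]
  calc _ ≤ x ^ (2 * η) * ∑ ω ∈ S, ‖a ω‖ ^ 2 :=
        sum_sq_norm_pow_mul_filter_not_le S n a hx0.le hx1.le η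
    _ ≤ x ^ (2 * η) := mul_le_of_le_one_right (pow_nonneg hx0.le _) hParseval
    _ ≤ ε := pow_two_mul_le_of_log_div_le hx0 hx1 hε.1 hη
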